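/- arXiv:2004.11578 — 3 statements merged into one kernel-verified Lean document; each statement's English description precedes it below -/
import Mathlib

section
/- Let f_1,…,f_k : ℝⁿ → ℝ be continuously differentiable and ε ≥ 0. If x ∈ ℝⁿ is Pareto optimal, then 0 ∈ F_ε(x). -/
/-- The Goldstein-type set `F_ε(x)` for continuously differentiable objectives:
the convex hull of all gradients of all objectives over the closed `ε`-ball around `x`. -/
noncomputable def Feps {n k : ℕ} (f : Fin k → EuclideanSpace ℝ (Fin n) → ℝ)
    (x : EuclideanSpace ℝ (Fin n)) (ε : ℝ) : Set (EuclideanSpace ℝ (Fin n)) :=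
  convexHull ℝ (⋃ i, (fun y => gradient (f i) y) '' Metric.closedBall x ε)

/-!
The gradients of the `f i` at `x` itself lie in `F_ε(x)`. If `0` were not in their convex hull,
which is compact, a separating hyperplane would give a direction `d` with `⟪∇f_i(x), d⟫ < 0`
for every `i`, and a small step from `x` along `d` would strictly decrease every objective,
contradicting Pareto optimality.
-/

open Filter Set Topology

theorem HasFDerivAt.eventually_lt_of_apply_neg {E : Type*} [NormedAddCommGroup E]
    [NormedSpace ℝ E] {f : E → ℝ} {f' : E →L[ℝ] ℝ} {x d : E}
    (hf : HasFDerivAt f f' x) (hd : f' d < 0) :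
    ∀ᶠ t in 𝓝[>] (0 : ℝ), f (x + t • d) < f x := by
  have hline : HasDerivAt (fun t : ℝ => f (x + t • d)) (f' d) 0 := by
    have hpath : HasDerivAt (fun t : ℝ => x + t • d) d 0 := by
      simpa using ((hasDerivAt_id (0 : ℝ)).smul_const d).const_add x
    exact hf.comp_hasDerivAt_of_eq 0 hpath (by simp)
  filter_upwards [hline.tendsto_slope_zero_right.eventually (eventually_lt_nhds hd),
    self_mem_nhdsWithin] with t hslope (ht : 0 < t)
  simp only [zero_add, zero_smul, add_zero, smul_eq_mul] at hslope
  nlinarith [mul_inv_cancel₀ ht.ne']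

variable {E : Type*} [NormedAddCommGroup E] [InnerProductSpace ℝ E] [CompleteSpace E]

theorem exists_inner_neg_of_zero_notMem_convexHull {s : Set E} (hs : s.Finite)
    (h0 : (0 : E) ∉ convexHull ℝ s) : ∃ d : E, ∀ v ∈ s, inner ℝ v d < 0 := by
  obtain ⟨φ, u, hφ0, hφs⟩ := geometric_hahn_banach_point_closed (convex_convexHull ℝ s)
    (hs.isCompact_convexHull (𝕜 := ℝ)).isClosed h0
  refine ⟨-(InnerProductSpace.toDual ℝ E).symm φ, fun v hv => ?_⟩
  have hv' := hφs v (subset_convexHull ℝ s hv)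
  rw [map_zero] at hφ0
  rw [inner_neg_right, real_inner_comm, InnerProductSpace.toDual_symm_apply]
  linarith

theorem exists_forall_lt_of_zero_notMem_convexHull_gradients {ι : Type*} [Finite ι]
    {f : ι → E → ℝ} {g : ι → E} {x : E} (hf : ∀ i, HasGradientAt (f i) (g i) x)
    (h0 : (0 : E) ∉ convexHull ℝ (range g)) : ∃ y, ∀ i, f i y < f i x := by
  obtain ⟨d, hd⟩ := exists_inner_neg_of_zero_notMem_convexHull (finite_range g) h0
  have hdescent : ∀ i, ∀ᶠ t in 𝓝[>] (0 : ℝ), f i (x + t • d) < f i x := fun i =>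
    (hf i).hasFDerivAt.eventually_lt_of_apply_neg (hd _ (mem_range_self i))
  obtain ⟨t, ht⟩ := (eventually_all.2 hdescent).exists
  exact ⟨x + t • d, ht⟩

/-- if `x` is Pareto optimal, then `0 ∈ F_ε(x)`. -/
theorem pareto_optimal_zero_mem_Feps {n k : ℕ} (hk : 0 < k)
    (f : Fin k → EuclideanSpace ℝ (Fin n) → ℝ) (hf : ∀ i, ContDiff ℝ 1 (f i))
    (x : EuclideanSpace ℝ (Fin n)) (ε : ℝ) (hε : 0 ≤ ε)
    (hpareto : ¬ ∃ y : EuclideanSpace ℝ (Fin n),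
      (∀ i, f i y ≤ f i x) ∧ (∃ j, f j y < f j x)) :
    (0 : EuclideanSpace ℝ (Fin n)) ∈ Feps f x ε := by
  by_contra h0
  have hgrad_sub : range (fun i => gradient (f i) x) ⊆
      ⋃ i, (fun y => gradient (f i) y) '' Metric.closedBall x ε := by
    rintro _ ⟨i, rfl⟩
    exact mem_iUnion.2 ⟨i, x, Metric.mem_closedBall_self hε, rfl⟩
  obtain ⟨y, hy⟩ := exists_forall_lt_of_zero_notMem_convexHull_gradients
    (fun i => ((hf i).differentiable one_ne_zero x).hasGradientAt)
    (fun h => h0 (convexHull_mono hgrad_sub h))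
  exact hpareto ⟨y, fun i => (hy i).le, ⟨0, hk⟩, hy _⟩
end

section
/- Let f_1,…,f_k : ℝⁿ → ℝ be continuously differentiable, x ∈ ℝⁿ, ε > 0, and let v̄ ≠ 0 be an element of minimal Euclidean norm in −F_ε(x) := {−w : w ∈ F_ε(x)}. Then for every i ∈ {1,…,k} and every t with 0 ≤ t ≤ ε/‖v̄‖ it holds that f_i(x + t v̄) ≤ f_i(x) − t ‖v̄‖². -/
/-! Every gradient `∇f_i(y)` with `‖y - x‖ ≤ ε` lies in `F_ε(x)`, so the variational inequality
characterising the minimal-norm element `v̄` of the convex set `-F_ε(x)` gives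
`⟪∇f_i(y), v̄⟫ ≤ -‖v̄‖²` on the whole ball. For `0 ≤ t ≤ ε/‖v̄‖` the segment from `x` to
`x + t v̄` stays in that ball, and the mean value theorem along it yields the descent. -/

open InnerProductSpace Metric Set

section InnerProductSpace

variable {E : Type*} [NormedAddCommGroup E] [InnerProductSpace ℝ E]

theorem norm_sq_le_inner_of_forall_norm_le {C : Set E} (hC : Convex ℝ C) {v : E} (hv : v ∈ C)
    (hmin : ∀ w ∈ C, ‖v‖ ≤ ‖w‖) {w : E} (hw : w ∈ C) : ‖v‖ ^ 2 ≤ ⟪v, w⟫_ℝ := by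
  have : Nonempty C := ⟨⟨v, hv⟩⟩
  have hproj : ‖(0 : E) - v‖ = ⨅ u : C, ‖(0 : E) - u‖ :=
    le_antisymm (le_ciInf fun u => by simpa using hmin u u.2)
      (ciInf_le ⟨0, forall_mem_range.mpr fun _ => norm_nonneg _⟩ (⟨v, hv⟩ : C))
  have h := (norm_eq_iInf_iff_real_inner_le_zero hC hv).mp hproj w hw
  rw [zero_sub, inner_neg_left, inner_sub_right, real_inner_self_eq_norm_sq] at h
  linarith

theorem hasDerivAt_comp_add_smul [CompleteSpace E] {f : E → ℝ} {x v : E} {s : ℝ}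
    (hf : DifferentiableAt ℝ f (x + s • v)) :
    HasDerivAt (fun r : ℝ => f (x + r • v)) ⟪gradient f (x + s • v), v⟫_ℝ s := by
  have hline : HasDerivAt (fun r : ℝ => x + r • v) v s := by
    simpa using ((hasDerivAt_id s).smul_const v).const_add x
  exact hf.hasGradientAt.hasFDerivAt.comp_hasDerivAt s hline

theorem sub_le_mul_of_inner_gradient_le [CompleteSpace E] {f : E → ℝ} (hf : Differentiable ℝ f)
    (x v : E) {t C : ℝ} (ht : 0 ≤ t)
    (hC : ∀ s ∈ Ioo 0 t, ⟪gradient f (x + s • v), v⟫_ℝ ≤ C) :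
    f (x + t • v) - f x ≤ C * t := by
  have hderiv (s : ℝ) := hasDerivAt_comp_add_smul (hf (x + s • v)) (s := s)
  have hφ : Differentiable ℝ fun r : ℝ => f (x + r • v) := fun s => (hderiv s).differentiableAt
  have := (convex_Icc 0 t).image_sub_le_mul_sub_of_deriv_le hφ.continuous.continuousOn
    hφ.differentiableOn (fun s hs => by
      rw [interior_Icc] at hs
      exact (hderiv s).deriv ▸ hC s hs)
    0 (left_mem_Icc.mpr ht) t (right_mem_Icc.mpr ht) ht
  simpa using this

end InnerProductSpace

section Feps

variable {n k : ℕ}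

theorem gradient_mem_Feps (f : Fin k → EuclideanSpace ℝ (Fin n) → ℝ)
    {x y : EuclideanSpace ℝ (Fin n)} {ε : ℝ} (i : Fin k) (hy : y ∈ closedBall x ε) :
    gradient (f i) y ∈ Feps f x ε :=
  subset_convexHull ℝ _ (mem_iUnion.mpr ⟨i, y, hy, rfl⟩)

theorem inner_gradient_le_neg_norm_sq_of_min_norm {f : Fin k → EuclideanSpace ℝ (Fin n) → ℝ}
    {x y vbar : EuclideanSpace ℝ (Fin n)} {ε : ℝ} (hvmem : vbar ∈ -(Feps f x ε))
    (hvmin : ∀ w ∈ -(Feps f x ε), ‖vbar‖ ≤ ‖w‖) (i : Fin k) (hy : y ∈ closedBall x ε) :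
    ⟪gradient (f i) y, vbar⟫_ℝ ≤ -‖vbar‖ ^ 2 := by
  have h := norm_sq_le_inner_of_forall_norm_le (convex_convexHull ℝ _).neg hvmem hvmin
    (neg_mem_neg.mpr (gradient_mem_Feps f i hy))
  rw [inner_neg_right, real_inner_comm] at h
  linarith

end Feps

theorem descent_step_size_bound_general {n k : ℕ}
    (f : Fin k → EuclideanSpace ℝ (Fin n) → ℝ) (hf : ∀ i, ContDiff ℝ 1 (f i))
    (x : EuclideanSpace ℝ (Fin n)) (ε : ℝ) (hε : 0 < ε)
    (vbar : EuclideanSpace ℝ (Fin n)) (hvmem : vbar ∈ -(Feps f x ε))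
    (hvmin : ∀ w ∈ -(Feps f x ε), ‖vbar‖ ≤ ‖w‖) :
    ∀ i : Fin k, ∀ t : ℝ, 0 ≤ t → t ≤ ε / ‖vbar‖ →
      f i (x + t • vbar) ≤ f i x - t * ‖vbar‖ ^ 2 := by
  intro i t ht htε
  have hball (s : ℝ) (hs : s ∈ Ioo 0 t) : x + s • vbar ∈ closedBall x ε := by
    rw [mem_closedBall, dist_self_add_left, norm_smul, Real.norm_of_nonneg hs.1.le]
    calc s * ‖vbar‖ ≤ t * ‖vbar‖ := by gcongr; exact hs.2.le
      _ ≤ ε := mul_le_of_le_div₀ hε.le (norm_nonneg _) htε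
  have := sub_le_mul_of_inner_gradient_le ((hf i).differentiable one_ne_zero) x vbar ht
    fun s hs => inner_gradient_le_neg_norm_sq_of_min_norm hvmem hvmin i (hball s hs)
  linarith

/-- guaranteed descent in each objective along the minimal-norm
direction `v̄` of `-F_ε(x)` for all step sizes `t ∈ [0, ε/‖v̄‖]`. -/
theorem descent_step_size_bound {n k : ℕ}
    (f : Fin k → EuclideanSpace ℝ (Fin n) → ℝ) (hf : ∀ i, ContDiff ℝ 1 (f i))
    (x : EuclideanSpace ℝ (Fin n)) (ε : ℝ) (hε : 0 < ε)
    (vbar : EuclideanSpace ℝ (Fin n)) (hvmem : vbar ∈ -(Feps f x ε))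
    (hvmin : ∀ w ∈ -(Feps f x ε), ‖vbar‖ ≤ ‖w‖) (hv0 : vbar ≠ 0) :
    ∀ i : Fin k, ∀ t : ℝ, 0 ≤ t → t ≤ ε / ‖vbar‖ →
      f i (x + t • vbar) ≤ f i x - t * ‖vbar‖ ^ 2 :=
  descent_step_size_bound_general f hf x ε hε vbar hvmem hvmin
end

section
/- Let f_1,…,f_k : ℝⁿ → ℝ each be differentiable at x ∈ ℝⁿ, and let v̄ be an element of minimal Euclidean norm in −conv{∇f_1(x),…,∇f_k(x)}. If v̄ ≠ 0, then v̄ is a common descent direction for all objectives at x: there exists t̄ > 0 such that f_i(x + t v̄) < f_i(x) for all i ∈ {1,…,k} and all t ∈ (0, t̄]. -/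
/-!
The minimal-norm point `v̄` of the convex set `K = −conv{∇fᵢ(x)}` satisfies the
variational inequality `‖v̄‖² ≤ ⟪v̄, w⟫` for every `w ∈ K`. Taking `w = −∇fᵢ(x)` gives
`⟪∇fᵢ(x), v̄⟫ ≤ −‖v̄‖² < 0`, so every directional derivative along `v̄` is negative and each
`fᵢ` strictly decreases on some interval `(0, tᵢ]`; finitely many objectives allow a common `t̄`.
-/

open Filter Set
open scoped RealInnerProductSpace Topology

theorem Convex.sq_norm_le_inner_of_isMinOn_norm {F : Type*} [NormedAddCommGroup F]
    [InnerProductSpace ℝ F] {K : Set F} (hK : Convex ℝ K) {v : F} (hv : v ∈ K)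
    (hmin : IsMinOn (‖·‖) K v) {w : F} (hw : w ∈ K) : ‖v‖ ^ 2 ≤ ⟪v, w⟫ := by
  have : Nonempty K := ⟨⟨v, hv⟩⟩
  have hinf : ‖(0 : F) - v‖ = ⨅ w : K, ‖(0 : F) - w‖ := by
    simp only [zero_sub, norm_neg]
    exact le_antisymm (le_ciInf fun w => isMinOn_iff.1 hmin w w.2)
      (ciInf_le ⟨0, by rintro _ ⟨w, rfl⟩; positivity⟩ (⟨v, hv⟩ : K))
  have := (norm_eq_iInf_iff_real_inner_le_zero hK hv).1 hinf w hw
  rw [zero_sub, inner_neg_left, inner_sub_right, real_inner_self_eq_norm_sq] at this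
  linarith

theorem HasGradientAt.hasLineDerivAt {F : Type*} [NormedAddCommGroup F] [InnerProductSpace ℝ F]
    [CompleteSpace F] {f : F → ℝ} {g x : F} (hf : HasGradientAt f g x) (v : F) :
    HasLineDerivAt ℝ f ⟪g, v⟫ x v :=
  hf.hasFDerivAt.hasLineDerivAt v

theorem HasLineDerivAt.eventually_lt_of_neg {E : Type*} [AddCommGroup E] [Module ℝ E]
    {f : E → ℝ} {f' : ℝ} {x v : E} (hf : HasLineDerivAt ℝ f f' x v) (hf' : f' < 0) :
    ∀ᶠ t in 𝓝[>] (0 : ℝ), f (x + t • v) < f x := by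
  filter_upwards [hf.tendsto_slope_zero_right.eventually_lt_const hf', self_mem_nhdsWithin]
    with t hslope (ht : 0 < t)
  have := mul_neg_of_pos_of_neg ht hslope
  rwa [smul_eq_mul, mul_inv_cancel_left₀ ht.ne', sub_neg] at this

/-- the minimal-norm element of the negative convex hull of the gradients,
if nonzero, is a common descent direction for all objectives at `x`. -/
theorem min_norm_convexHull_gradients_common_descent {n k : ℕ}
    (f : Fin k → EuclideanSpace ℝ (Fin n) → ℝ) (x : EuclideanSpace ℝ (Fin n))
    (hdiff : ∀ i, DifferentiableAt ℝ (f i) x)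
    (vbar : EuclideanSpace ℝ (Fin n))
    (hvmem : vbar ∈ -(convexHull ℝ (Set.range fun i => gradient (f i) x)))
    (hvmin : ∀ w ∈ -(convexHull ℝ (Set.range fun i => gradient (f i) x)), ‖vbar‖ ≤ ‖w‖)
    (hv0 : vbar ≠ 0) :
    ∃ tbar : ℝ, 0 < tbar ∧ ∀ i : Fin k, ∀ t : ℝ, 0 < t → t ≤ tbar →
      f i (x + t • vbar) < f i x := by
  have hdescent : ∀ i, ⟪gradient (f i) x, vbar⟫ < 0 := fun i => by
    have hgrad : -gradient (f i) x ∈ -(convexHull ℝ (range fun i => gradient (f i) x)) :=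
      neg_mem_neg.2 (subset_convexHull ℝ _ (mem_range_self i))
    have := (convex_convexHull ℝ _).neg.sq_norm_le_inner_of_isMinOn_norm hvmem
      (isMinOn_iff.2 hvmin) hgrad
    rw [inner_neg_right, real_inner_comm] at this
    linarith [pow_pos (norm_pos_iff.2 hv0) 2]
  have hevent : ∀ᶠ t in 𝓝[>] (0 : ℝ), ∀ i, f i (x + t • vbar) < f i x :=
    eventually_all.2 fun i =>
      ((hdiff i).hasGradientAt.hasLineDerivAt vbar).eventually_lt_of_neg (hdescent i)
  obtain ⟨tbar, htbar, hsub⟩ := mem_nhdsGT_iff_exists_Ioc_subset.1 hevent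
  exact ⟨tbar, htbar, fun i t ht htle => hsub ⟨ht, htle⟩ i⟩
end
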